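/- Let r ≥ 2 and n ≥ 1 be integers, and let x be an n×n complex unitary matrix with xʳ = 1 and x ≠ 1. Then ‖x − 1‖ ≥ |e^{2πi/r} − 1|, where ‖·‖ is the ℓ² operator norm on matrices. -/

import Mathlib

/-!
Since `x ^ r = 1` and `X ^ r - 1` is separable, `x` is diagonalizable; as `x ≠ 1` it therefore has
an eigenvalue `μ ≠ 1`, necessarily an `r`-th root of unity. Then `μ - 1` lies in the spectrum of
`x - 1`, so `‖μ - 1‖ ≤ ‖x - 1‖`, and among the `r`-th roots of unity other than `1` the primitive
root `e^{2πi/r}` is closest to `1`.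
-/

open Polynomial

theorem Module.End.eq_algebraMap_of_separable_of_forall_hasEigenvalue_eq {K V : Type*} [Field K]
    [IsAlgClosed K] [AddCommGroup V] [Module K V] [FiniteDimensional K V] {f : End K V}
    {p : K[X]} (hp : p.Separable) (hpf : aeval f p = 0) {a : K}
    (h : ∀ μ, f.HasEigenvalue μ → μ = a) : f = algebraMap K (End K V) a := by
  have hdvd : minpoly K f ∣ p := minpoly.dvd K f hpf
  -- The minimal polynomial has simple roots, all equal to `a`, so it divides `X - C a`.
  have hroots : (minpoly K f).roots ≤ {a} := by
    refine (Multiset.le_iff_subset (nodup_roots (hp.of_dvd hdvd))).2 fun μ hμ => ?_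
    exact Multiset.mem_singleton.2 (h μ (hasEigenvalue_of_isRoot (isRoot_of_mem_roots hμ)))
  have hmin : minpoly K f ∣ X - C a := by
    rw [(IsAlgClosed.splits _).eq_prod_roots_of_monic
      (minpoly.monic (Algebra.IsIntegral.isIntegral f))]
    simpa using Multiset.prod_dvd_prod_of_le (Multiset.map_le_map (f := fun b => X - C b) hroots)
  simpa [sub_eq_zero] using minpoly.dvd_iff.1 hmin

theorem Matrix.exists_mem_spectrum_ne_one_of_pow_eq_one {K n : Type*} [Field K] [IsAlgClosed K]
    [Fintype n] [DecidableEq n] {A : Matrix n n K} {r : ℕ} (hr : (r : K) ≠ 0) (hA : A ^ r = 1)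
    (hA1 : A ≠ 1) : ∃ μ ∈ spectrum K A, μ ≠ 1 := by
  by_contra! h
  have hsep : (X ^ r - 1 : K[X]).Separable := X_pow_sub_one_separable_iff.2 hr
  have hann : aeval (toLinAlgEquiv' A) (X ^ r - 1 : K[X]) = 0 := by
    rw [map_sub, map_pow, aeval_X, ← map_pow, hA]
    simp
  refine hA1 (toLinAlgEquiv'.injective ?_)
  rw [Module.End.eq_algebraMap_of_separable_of_forall_hasEigenvalue_eq hsep hann fun μ hμ =>
    h μ (by rwa [Module.End.hasEigenvalue_iff_mem_spectrum, AlgEquiv.spectrum_eq] at hμ),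
    map_one, map_one]

open Real in
theorem Real.sin_le_sin_of_le_of_le_pi_sub {a x : ℝ} (ha : 0 ≤ a) (hax : a ≤ x)
    (hx : x ≤ π - a) : sin a ≤ sin x := by
  rcases le_total x (π / 2) with hx2 | hx2
  · exact sin_le_sin_of_le_of_le_pi_div_two (by linarith [pi_pos]) hx2 hax
  · rw [← sin_pi_sub x]
    exact sin_le_sin_of_le_of_le_pi_div_two (by linarith [pi_pos]) (by linarith) (by linarith)

open Real in
theorem Complex.norm_exp_two_pi_I_div_pow_sub_one (r k : ℕ) :
    ‖exp (2 * π * I / r) ^ k - 1‖ = 2 * |Real.sin (π * k / r)| := by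
  rw [← exp_nat_mul,
    show (k : ℂ) * (2 * π * I / r) = I * ((2 * π * k / r : ℝ) : ℂ) by push_cast; ring,
    norm_exp_I_mul_ofReal_sub_one, norm_mul, Real.norm_two, Real.norm_eq_abs]
  ring_nf

open Real in
theorem Complex.norm_exp_two_pi_I_div_sub_one_le {r : ℕ} {μ : ℂ} (hμr : μ ^ r = 1)
    (hμ1 : μ ≠ 1) : ‖exp (2 * π * I / r) - 1‖ ≤ ‖μ - 1‖ := by
  rcases eq_or_ne r 0 with rfl | hr
  · simp
  have : NeZero r := ⟨hr⟩
  obtain ⟨k, hkr, rfl⟩ := (isPrimitiveRoot_exp r hr).eq_pow_of_pow_eq_one hμr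
  have hk : (1 : ℝ) ≤ k :=
    Nat.one_le_cast.2 (Nat.one_le_iff_ne_zero.2 (by rintro rfl; exact hμ1 (pow_zero _)))
  have hkr : (k : ℝ) + 1 ≤ r := by exact_mod_cast hkr
  have hr' : (0 : ℝ) < r := by positivity
  have h1 := norm_exp_two_pi_I_div_pow_sub_one r 1
  rw [pow_one, Nat.cast_one, mul_one] at h1
  rw [h1, norm_exp_two_pi_I_div_pow_sub_one]
  have hlo : π / r ≤ π * k / r := by gcongr; nlinarith [pi_pos]
  have hhi : π * k / r ≤ π - π / r := by
    rw [le_sub_iff_add_le, ← add_div, div_le_iff₀ hr']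
    nlinarith [pi_pos]
  have hpos : 0 ≤ Real.sin (π / r) :=
    sin_nonneg_of_nonneg_of_le_pi (by positivity) (div_le_self pi_pos.le (by linarith))
  rw [abs_of_nonneg hpos]
  gcongr
  exact (Real.sin_le_sin_of_le_of_le_pi_sub (by positivity) hlo hhi).trans (le_abs_self _)

open scoped Matrix.Norms.L2Operator

theorem norm_sub_one_ge_of_unitary_root_of_unity_general (r n : ℕ) (hr : 2 ≤ r)
    (x : Matrix (Fin n) (Fin n) ℂ)
    (hxr : x ^ r = 1) (hx1 : x ≠ 1) :
    ‖Complex.exp (2 * (Real.pi : ℂ) * Complex.I / (r : ℂ)) - 1‖ ≤ ‖x - 1‖ := by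
  have : Nontrivial (Matrix (Fin n) (Fin n) ℂ) := nontrivial_of_ne x 1 hx1
  obtain ⟨μ, hμx, hμ1⟩ :=
    x.exists_mem_spectrum_ne_one_of_pow_eq_one (by norm_cast; omega) hxr hx1
  have hμr : μ ^ r = 1 := by
    simpa [hxr, spectrum.one_eq] using spectrum.pow_mem_pow x r hμx
  have hμx1 : μ - 1 ∈ spectrum ℂ (x - 1) := by
    rw [← map_one (algebraMap ℂ _), ← spectrum.sub_singleton_eq]
    exact Set.sub_mem_sub hμx rfl
  exact (Complex.norm_exp_two_pi_I_div_sub_one_le hμr hμ1).trans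
    (spectrum.norm_le_norm_of_mem hμx1)

/-- A nontrivial unitary matrix `x` with `xʳ = 1` satisfies
`‖x - 1‖ ≥ |e^{2πi/r} - 1|` in the `ℓ²` operator norm. -/
theorem norm_sub_one_ge_of_unitary_root_of_unity (r n : ℕ) (hr : 2 ≤ r) (hn : 1 ≤ n)
    (x : Matrix (Fin n) (Fin n) ℂ) (hx : x ∈ Matrix.unitaryGroup (Fin n) ℂ)
    (hxr : x ^ r = 1) (hx1 : x ≠ 1) :
    ‖Complex.exp (2 * (Real.pi : ℂ) * Complex.I / (r : ℂ)) - 1‖ ≤ ‖x - 1‖ :=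
  norm_sub_one_ge_of_unitary_root_of_unity_general r n hr x hxr hx1
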